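/- Let (D,F) be a valid pair with F = (f₁,…,f_s) that is not a hard pair and such that D is biconnected. Then either D is F-dicolourable, or there exists i ∈ {1,…,s} such that, setting f̃₁ = fᵢ and f̃₂ = Σ_{j≠i} f_j, the pair (D, F̃ = (f̃₁, f̃₂)) is a valid pair that is not a hard pair, and every F̃-dicolouring of D implies that D is F-dicolourable (i.e. if D is F̃-dicolourable then D is F-dicolourable). -/

import Mathlib

open scoped Classical

/-- A finite digraph with vertex set a `Finset ℕ` and no loops.
Both arcs `(u,v)` and `(v,u)` may be present (a digon). -/
structure Digraph' where
  verts : Finset ℕ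
  arcs : Finset (ℕ × ℕ)
  mem_fst : ∀ a ∈ arcs, a.1 ∈ verts
  mem_snd : ∀ a ∈ arcs, a.2 ∈ verts
  no_loops : ∀ a ∈ arcs, a.1 ≠ a.2

namespace Digraph'

/-- In-degree of `v`. -/
def inDeg (D : Digraph') (v : ℕ) : ℕ := (D.arcs.filter fun a => a.2 = v).card

/-- Out-degree of `v`. -/
def outDeg (D : Digraph') (v : ℕ) : ℕ := (D.arcs.filter fun a => a.1 = v).card

/-- In-neighbourhood of `v`. -/
def inNbrs (D : Digraph') (v : ℕ) : Finset ℕ := (D.arcs.filter fun a => a.2 = v).image Prod.fst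

/-- Out-neighbourhood of `v`. -/
def outNbrs (D : Digraph') (v : ℕ) : Finset ℕ := (D.arcs.filter fun a => a.1 = v).image Prod.snd

/-- Neighbourhood of `v` in the underlying graph. -/
def ugNbrs (D : Digraph') (v : ℕ) : Finset ℕ := D.inNbrs v ∪ D.outNbrs v

/-- `H` is a subdigraph of `D`. -/
def IsSubdigraph (H D : Digraph') : Prop := H.verts ⊆ D.verts ∧ H.arcs ⊆ D.arcs

/-- The subdigraph of `D` induced by the vertex set `X`. -/
def induce (D : Digraph') (X : Finset ℕ) : Digraph' where
  verts := D.verts ∩ X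
  arcs := D.arcs.filter fun a => a.1 ∈ X ∧ a.2 ∈ X
  mem_fst := fun a ha => by
    simp only [Finset.mem_filter] at ha
    exact Finset.mem_inter.mpr ⟨D.mem_fst a ha.1, ha.2.1⟩
  mem_snd := fun a ha => by
    simp only [Finset.mem_filter] at ha
    exact Finset.mem_inter.mpr ⟨D.mem_snd a ha.1, ha.2.2⟩
  no_loops := fun a ha => by
    simp only [Finset.mem_filter] at ha
    exact D.no_loops a ha.1

/-- `D − X`, the digraph obtained from `D` by deleting the vertices of `X`. -/
def del (D : Digraph') (X : Finset ℕ) : Digraph' := D.induce (D.verts \ X)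

/-- Adjacency in the underlying graph of `D`. -/
def ugAdj (D : Digraph') (u v : ℕ) : Prop :=
  u ∈ D.verts ∧ v ∈ D.verts ∧ ((u, v) ∈ D.arcs ∨ (v, u) ∈ D.arcs)

/-- `D` is connected, i.e. its underlying graph is connected. -/
def Connected (D : Digraph') : Prop :=
  D.verts.Nonempty ∧ ∀ u ∈ D.verts, ∀ v ∈ D.verts, Relation.ReflTransGen D.ugAdj u v

/-- `D` is biconnected: it has at least two vertices, is connected, and stays
connected after the deletion of any vertex. -/
def Biconnected (D : Digraph') : Prop :=
  2 ≤ D.verts.card ∧ D.Connected ∧ ∀ x ∈ D.verts, (D.del {x}).Connected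

/-- Every arc of `D` lies in a digon. -/
def Bidirected (D : Digraph') : Prop := ∀ a ∈ D.arcs, (a.2, a.1) ∈ D.arcs

/-- The underlying graph of `D` is a cycle. -/
def IsCycleUG (D : Digraph') : Prop :=
  D.Connected ∧ ∀ v ∈ D.verts, (D.ugNbrs v).card = 2

/-- `D` is a bidirected odd cycle. -/
def BidirectedOddCycle (D : Digraph') : Prop :=
  D.Bidirected ∧ D.IsCycleUG ∧ Odd D.verts.card

/-- `D` is a bidirected complete graph. -/
def BidirectedComplete (D : Digraph') : Prop :=
  ∀ u ∈ D.verts, ∀ v ∈ D.verts, u ≠ v → (u, v) ∈ D.arcs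

/-- `D` is strictly-`f`-bidegenerate: every nonempty subdigraph `H` of `D` contains a
vertex `v` with `d⁻_H(v) < f⁻(v)` or `d⁺_H(v) < f⁺(v)`. -/
def StrictlyBidegenerate (D : Digraph') (f : ℕ → ℕ × ℕ) : Prop :=
  ∀ H : Digraph', H.IsSubdigraph D → H.verts.Nonempty →
    ∃ v ∈ H.verts, H.inDeg v < (f v).1 ∨ H.outDeg v < (f v).2

/-- `α` is an `F`-dicolouring of `D`: for each colour `i`, the subdigraph induced by the
vertices coloured `i` is strictly-`Fᵢ`-bidegenerate. -/
def IsDicolouring (D : Digraph') (s : ℕ) (F : Fin s → ℕ → ℕ × ℕ) (α : ℕ → Fin s) : Prop :=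
  ∀ i : Fin s, (D.induce (D.verts.filter fun v => α v = i)).StrictlyBidegenerate (F i)

/-- `D` is `F`-dicolourable. -/
def Dicolourable (D : Digraph') (s : ℕ) (F : Fin s → ℕ → ℕ × ℕ) : Prop :=
  ∃ α : ℕ → Fin s, D.IsDicolouring s F α

/-- `(D,F)` is a valid pair: `D` is connected and the colour budget dominates the
in- and out-degrees at every vertex. -/
def ValidPair (D : Digraph') (s : ℕ) (F : Fin s → ℕ → ℕ × ℕ) : Prop :=
  D.Connected ∧ ∀ v ∈ D.verts,
    D.inDeg v ≤ ∑ i, (F i v).1 ∧ D.outDeg v ≤ ∑ i, (F i v).2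

/-- `(D,F)` is tight: both budget inequalities are equalities at every vertex. -/
def Tight (D : Digraph') (s : ℕ) (F : Fin s → ℕ → ℕ × ℕ) : Prop :=
  ∀ v ∈ D.verts, ∑ i, (F i v).1 = D.inDeg v ∧ ∑ i, (F i v).2 = D.outDeg v

/-- Hard pairs, defined inductively: monochromatic, bicycle, complete, and join hard pairs. -/
inductive IsHardPair : (s : ℕ) → Digraph' → (Fin s → ℕ → ℕ × ℕ) → Prop
  | mono {s : ℕ} {D : Digraph'} {F : Fin s → ℕ → ℕ × ℕ} (i : Fin s)
      (hbi : D.Biconnected)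
      (hi : ∀ v ∈ D.verts, F i v = (D.inDeg v, D.outDeg v))
      (hk : ∀ k : Fin s, k ≠ i → ∀ v ∈ D.verts, F k v = (0, 0)) :
      IsHardPair s D F
  | bicycle {s : ℕ} {D : Digraph'} {F : Fin s → ℕ → ℕ × ℕ} (i j : Fin s) (hij : i ≠ j)
      (hD : D.BidirectedOddCycle)
      (hi : ∀ v ∈ D.verts, F i v = (1, 1))
      (hj : ∀ v ∈ D.verts, F j v = (1, 1))
      (hk : ∀ k : Fin s, k ≠ i → k ≠ j → ∀ v ∈ D.verts, F k v = (0, 0)) :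
      IsHardPair s D F
  | complete {s : ℕ} {D : Digraph'} {F : Fin s → ℕ → ℕ × ℕ}
      (hD : D.BidirectedComplete)
      (hconst : ∀ k : Fin s, ∀ u ∈ D.verts, ∀ v ∈ D.verts, F k u = F k v)
      (hsym : ∀ k : Fin s, ∀ v ∈ D.verts, (F k v).1 = (F k v).2)
      (hsum : ∀ v ∈ D.verts, ∑ k, (F k v).2 = D.verts.card - 1) :
      IsHardPair s D F
  | join {s : ℕ} {D : Digraph'} {F : Fin s → ℕ → ℕ × ℕ}
      (D₁ D₂ : Digraph') (F₁ F₂ : Fin s → ℕ → ℕ × ℕ) (x : ℕ)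
      (h₁ : IsHardPair s D₁ F₁) (h₂ : IsHardPair s D₂ F₂)
      (hx : D₁.verts ∩ D₂.verts = {x})
      (hV : D.verts = D₁.verts ∪ D₂.verts)
      (hA : D.arcs = D₁.arcs ∪ D₂.arcs)
      (hF₁ : ∀ k : Fin s, ∀ v ∈ D₁.verts, v ≠ x → F k v = F₁ k v)
      (hF₂ : ∀ k : Fin s, ∀ v ∈ D₂.verts, v ≠ x → F k v = F₂ k v)
      (hFx : ∀ k : Fin s, F k x = ((F₁ k x).1 + (F₂ k x).1, (F₁ k x).2 + (F₂ k x).2)) :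
      IsHardPair s D F

/-- The sequence of functions of the pair reduced from `(D,F)` by a colouring `α` of
`X ⊆ V(D)`: the budget of colour `i` at `u` decreases by the number of in- and out-neighbours
of `u` inside `X` coloured `i` (truncated at `0`). -/
def reduceF (D : Digraph') {s : ℕ} (F : Fin s → ℕ → ℕ × ℕ) (X : Finset ℕ) (α : ℕ → Fin s) :
    Fin s → ℕ → ℕ × ℕ :=
  fun i u =>
    ((F i u).1 - ((D.inNbrs u ∩ X).filter fun w => α w = i).card,
     (F i u).2 - ((D.outNbrs u ∩ X).filter fun w => α w = i).card)

/-- `B` is a block of `D`: a maximal biconnected subdigraph. -/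
def IsBlock (B D : Digraph') : Prop :=
  B.IsSubdigraph D ∧ B.Biconnected ∧
    ∀ B' : Digraph', B'.IsSubdigraph D → B'.Biconnected → B.IsSubdigraph B' → B' = B

/-- `x` is a cut-vertex of `D`: `D − x` is disconnected. -/
def CutVertex (D : Digraph') (x : ℕ) : Prop :=
  x ∈ D.verts ∧ (D.del {x}).verts.Nonempty ∧ ¬ (D.del {x}).Connected

/-- `B` is an end-block of `D` whose unique cut-vertex (of `D`) in `B` is `x`. -/
def IsEndBlockAt (B D : Digraph') (x : ℕ) : Prop :=
  IsBlock B D ∧ x ∈ B.verts ∧ D.CutVertex x ∧ ∀ y ∈ B.verts, D.CutVertex y → y = x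

/-- `B` is a monochromatic hard end-block with cut-vertex `x`, for colour `c`. -/
def MonoHardEndBlock {s : ℕ} (F : Fin s → ℕ → ℕ × ℕ) (B : Digraph') (x : ℕ) (c : Fin s) : Prop :=
  B.inDeg x ≤ (F c x).1 ∧ B.outDeg x ≤ (F c x).2 ∧
    ∀ v ∈ B.verts, v ≠ x →
      F c v = (B.inDeg v, B.outDeg v) ∧ ∀ k : Fin s, k ≠ c → F k v = (0, 0)

/-- `B` is a bicycle hard end-block with cut-vertex `x`. -/
def BicycleHardEndBlock {s : ℕ} (F : Fin s → ℕ → ℕ × ℕ) (B : Digraph') (x : ℕ) : Prop :=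
  B.BidirectedOddCycle ∧
    ∃ i j : Fin s, i ≠ j ∧
      1 ≤ (F i x).1 ∧ 1 ≤ (F i x).2 ∧ 1 ≤ (F j x).1 ∧ 1 ≤ (F j x).2 ∧
      ∀ v ∈ B.verts, v ≠ x →
        F i v = (1, 1) ∧ F j v = (1, 1) ∧ ∀ k : Fin s, k ≠ i → k ≠ j → F k v = (0, 0)

/-- `B` is a complete hard end-block with cut-vertex `x`. -/
def CompleteHardEndBlock {s : ℕ} (F : Fin s → ℕ → ℕ × ℕ) (B : Digraph') (x : ℕ) : Prop :=
  B.BidirectedComplete ∧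
    (∀ k : Fin s, ∀ u ∈ B.verts, u ≠ x → ∀ v ∈ B.verts, v ≠ x → F k u = F k v) ∧
    (∀ k : Fin s, ∀ v ∈ B.verts, v ≠ x → (F k v).1 = (F k v).2) ∧
    (∀ k : Fin s, ∀ u ∈ B.verts, u ≠ x → (F k u).1 ≤ (F k x).1 ∧ (F k u).2 ≤ (F k x).2)

/-- `B` is a hard end-block with cut-vertex `x`. -/
def HardEndBlock {s : ℕ} (F : Fin s → ℕ → ℕ × ℕ) (B : Digraph') (x : ℕ) : Prop :=
  (∃ c : Fin s, MonoHardEndBlock F B x c) ∨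
    BicycleHardEndBlock F B x ∨ CompleteHardEndBlock F B x

/-- `(D',F')` is the contraction of `(D,F)` with respect to the hard end-block `B` with
cut-vertex `x`, where `u` is a vertex of `B` other than `x`. -/
def IsContraction (D : Digraph') {s : ℕ} (F : Fin s → ℕ → ℕ × ℕ) (B : Digraph') (x u : ℕ)
    (D' : Digraph') (F' : Fin s → ℕ → ℕ × ℕ) : Prop :=
  D' = D.del (B.verts \ {x}) ∧
  (∀ k : Fin s, ∀ v ∈ D'.verts, v ≠ x → F' k v = F k v) ∧
  ((∃ c : Fin s, MonoHardEndBlock F B x c ∧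
      F' c x = ((F c x).1 - B.inDeg x, (F c x).2 - B.outDeg x) ∧
      ∀ k : Fin s, k ≠ c → F' k x = F k x) ∨
   ((¬ ∃ c : Fin s, MonoHardEndBlock F B x c) ∧
      ∀ k : Fin s, F' k x = ((F k x).1 - (F k u).1, (F k x).2 - (F k u).2)))

/-- Property (E): all the functions exceed `1` in the relevant coordinate at every vertex
having an in-(resp. out-)neighbour. -/
def PropE (D : Digraph') {s : ℕ} (F : Fin s → ℕ → ℕ × ℕ) : Prop :=
  ∀ x ∈ D.verts, ∀ c : Fin s,
    (0 < D.inDeg x → 1 ≤ (F c x).1) ∧ (0 < D.outDeg x → 1 ≤ (F c x).2)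

/-- `C` is a directed cycle: connected, and every vertex has in- and out-degree one. -/
def IsDirectedCycle (C : Digraph') : Prop :=
  C.Connected ∧ ∀ v ∈ C.verts, C.inDeg v = 1 ∧ C.outDeg v = 1

/-- `D` is acyclic: it contains no directed cycle. -/
def AcyclicD (D : Digraph') : Prop :=
  ¬ ∃ C : Digraph', C.IsSubdigraph D ∧ C.IsDirectedCycle

/-- `α` is a `k`-dicolouring of `D`: every colour class induces an acyclic subdigraph. -/
def IsKDicolouring (D : Digraph') (k : ℕ) (α : ℕ → Fin k) : Prop :=
  ∀ i : Fin k, AcyclicD (D.induce (D.verts.filter fun v => α v = i))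

/-- The dichromatic number of `D`. -/
noncomputable def dichromatic (D : Digraph') : ℕ :=
  sInf {k : ℕ | ∃ α : ℕ → Fin k, D.IsKDicolouring k α}

end Digraph'

open Digraph'

/-- The two-colour sequence obtained from `F` by keeping colour `i` and merging all other
colours. -/
def twoColours {s : ℕ} (F : Fin s → ℕ → ℕ × ℕ) (i : Fin s) : Fin 2 → ℕ → ℕ × ℕ :=
  ![F i, fun v => ∑ j ∈ Finset.univ.erase i, F j v]


/-!
Merging all colours but `i` preserves validity, and a `(fᵢ, Σ_{j ≠ i} f_j)`-dicolouring refines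
to an `F`-dicolouring: a strictly `Σ_{j ∈ T} f_j`-bidegenerate digraph splits greedily into
strictly `f_j`-bidegenerate classes (remove a vertex of small degree, colour the rest, and give
the vertex a colour in which it has too few neighbours). So only non-hardness of some merged
pair is at stake. On a biconnected digraph a hard pair cannot be a nontrivial join, so if every
merged pair were hard, each would be monochromatic, a bicycle or complete. Since `(D, F)` is not
monochromatic, every colour is then constant and symmetric on `D`, and a colour with nonzero
budget makes `(D, F)` itself a bicycle or a complete hard pair.
-/

theorem Finset.filter_update_eq_insert {α ι : Type*} [DecidableEq α] [DecidableEq ι]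
    {X : Finset α} {v : α} (hv : v ∈ X) (β : α → ι) (c : ι) :
    {w ∈ X | Function.update β v c w = c} = insert v {w ∈ X.erase v | β w = c} := by
  ext w
  by_cases hwv : w = v <;> simp [hwv, hv]

theorem Finset.filter_update_eq_of_ne {α ι : Type*} [DecidableEq α] [DecidableEq ι]
    {X : Finset α} {v : α} (β : α → ι) {c j : ι} (hjc : j ≠ c) :
    {w ∈ X | Function.update β v c w = j} = {w ∈ X.erase v | β w = j} := by
  ext w
  by_cases hwv : w = v <;> simp [hwv, Ne.symm hjc]

namespace Digraph'

open Finset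

theorem ext {D₁ D₂ : Digraph'} (hv : D₁.verts = D₂.verts) (ha : D₁.arcs = D₂.arcs) :
    D₁ = D₂ := by
  cases D₁; cases D₂; simp_all

section Neighbours

variable {D H : Digraph'} {X : Finset ℕ} {v : ℕ}

theorem inDeg_eq_card_inNbrs : D.inDeg v = #(D.inNbrs v) :=
  (card_image_of_injOn fun _ ha _ hb hab =>
    Prod.ext hab ((mem_filter.mp ha).2.trans (mem_filter.mp hb).2.symm)).symm

theorem outDeg_eq_card_outNbrs : D.outDeg v = #(D.outNbrs v) :=
  (card_image_of_injOn fun _ ha _ hb hab =>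
    Prod.ext ((mem_filter.mp ha).2.trans (mem_filter.mp hb).2.symm) hab).symm

theorem mem_inNbrs {u : ℕ} : u ∈ D.inNbrs v ↔ (u, v) ∈ D.arcs := by
  simp [inNbrs]

theorem mem_outNbrs {u : ℕ} : u ∈ D.outNbrs v ↔ (v, u) ∈ D.arcs := by
  simp [outNbrs]

theorem notMem_inNbrs_self : v ∉ D.inNbrs v := fun h => D.no_loops _ (mem_inNbrs.mp h) rfl

theorem notMem_outNbrs_self : v ∉ D.outNbrs v := fun h => D.no_loops _ (mem_outNbrs.mp h) rfl

theorem inNbrs_induce (hv : v ∈ X) : (D.induce X).inNbrs v = D.inNbrs v ∩ X := by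
  ext u
  simp [mem_inNbrs, induce, hv]

theorem outNbrs_induce (hv : v ∈ X) : (D.induce X).outNbrs v = D.outNbrs v ∩ X := by
  ext u
  simp [mem_outNbrs, induce, hv]

theorem IsSubdigraph.inNbrs_subset (h : H.IsSubdigraph D) : H.inNbrs v ⊆ D.inNbrs v :=
  fun _ hu => mem_inNbrs.mpr (h.2 (mem_inNbrs.mp hu))

theorem IsSubdigraph.outNbrs_subset (h : H.IsSubdigraph D) : H.outNbrs v ⊆ D.outNbrs v :=
  fun _ hu => mem_outNbrs.mpr (h.2 (mem_outNbrs.mp hu))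

end Neighbours

section Subdigraphs

variable {D H K : Digraph'} {X Y : Finset ℕ}

theorem IsSubdigraph.refl (D : Digraph') : D.IsSubdigraph D := ⟨subset_rfl, subset_rfl⟩

theorem IsSubdigraph.trans (h₁ : K.IsSubdigraph H) (h₂ : H.IsSubdigraph D) : K.IsSubdigraph D :=
  ⟨h₁.1.trans h₂.1, h₁.2.trans h₂.2⟩

theorem induce_isSubdigraph (D : Digraph') (X : Finset ℕ) : (D.induce X).IsSubdigraph D :=
  ⟨inter_subset_left, filter_subset _ _⟩

theorem induce_verts_of_subset (h : X ⊆ D.verts) : (D.induce X).verts = X :=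
  inter_eq_right.mpr h

theorem del_verts (D : Digraph') (X : Finset ℕ) : (D.del X).verts = D.verts \ X :=
  induce_verts_of_subset sdiff_subset

theorem IsSubdigraph.isSubdigraph_induce (hK : K.IsSubdigraph D) (hX : K.verts ⊆ X) :
    K.IsSubdigraph (D.induce X) :=
  ⟨fun _ hw => mem_inter.mpr ⟨hK.1 hw, hX hw⟩, fun a ha =>
    mem_filter.mpr ⟨hK.2 ha, hX (K.mem_fst a ha), hX (K.mem_snd a ha)⟩⟩

theorem induce_mono (D : Digraph') (h : X ⊆ Y) : (D.induce X).IsSubdigraph (D.induce Y) :=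
  (induce_isSubdigraph D X).isSubdigraph_induce (inter_subset_right.trans h)

theorem exists_arc (hc : D.Connected) (h2 : 2 ≤ #D.verts) : D.arcs.Nonempty := by
  obtain ⟨u, hu, v, hv, huv⟩ := one_lt_card.mp h2
  induction hc.2 u hu v hv with
  | refl => exact absurd rfl huv
  | tail _ hadj => exact hadj.2.2.elim (fun h => ⟨_, h⟩) fun h => ⟨_, h⟩

theorem arcs_eq_empty_of_verts_eq_singleton {x : ℕ} (h : D.verts = {x}) : D.arcs = ∅ :=
  eq_empty_of_forall_notMem fun a ha => D.no_loops a ha <| by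
    have h₁ := D.mem_fst a ha
    have h₂ := D.mem_snd a ha
    rw [h, mem_singleton] at h₁ h₂
    rw [h₁, h₂]

end Subdigraphs

section Bidegenerate

variable {D H : Digraph'} {g : ℕ → ℕ × ℕ}

theorem StrictlyBidegenerate.anti (hH : H.IsSubdigraph D) (h : D.StrictlyBidegenerate g) :
    H.StrictlyBidegenerate g :=
  fun K hK hne => h K (hK.trans hH) hne

theorem strictlyBidegenerate_induce_empty (D : Digraph') (g : ℕ → ℕ × ℕ) :
    (D.induce ∅).StrictlyBidegenerate g := by
  rintro K hK ⟨w, hw⟩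
  simpa [induce] using hK.1 hw

/-- A subdigraph through `v` has `v` as its witness; any other lives in `D[C]`. -/
theorem StrictlyBidegenerate.induce_insert {C : Finset ℕ} {v : ℕ}
    (hC : (D.induce C).StrictlyBidegenerate g)
    (hv : #(D.inNbrs v ∩ C) < (g v).1 ∨ #(D.outNbrs v ∩ C) < (g v).2) :
    (D.induce (insert v C)).StrictlyBidegenerate g := by
  intro K hK hKne
  have hKD := hK.trans (induce_isSubdigraph D _)
  by_cases hvK : v ∈ K.verts
  · refine ⟨v, hvK, ?_⟩
    have hin : K.inDeg v ≤ #(D.inNbrs v ∩ C) := by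
      rw [inDeg_eq_card_inNbrs, ← inter_insert_of_notMem notMem_inNbrs_self,
        ← inNbrs_induce (mem_insert_self v C)]
      exact card_le_card hK.inNbrs_subset
    have hout : K.outDeg v ≤ #(D.outNbrs v ∩ C) := by
      rw [outDeg_eq_card_outNbrs, ← inter_insert_of_notMem notMem_outNbrs_self,
        ← outNbrs_induce (mem_insert_self v C)]
      exact card_le_card hK.outNbrs_subset
    omega
  · refine hC K (hKD.isSubdigraph_induce fun w hw => ?_) hKne
    have := (mem_inter.mp (hK.1 hw)).2
    exact (mem_insert.mp this).resolve_left (ne_of_mem_of_not_mem hw hvK)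

end Bidegenerate

/-- Pigeonhole: the colour classes of `β` partition the neighbourhood of `v` in `X`. -/
theorem exists_colour_lt_of_deg_lt {ι : Type*} [DecidableEq ι] {D : Digraph'} {X : Finset ℕ}
    {v : ℕ} (hv : v ∈ X) (F : ι → ℕ → ℕ × ℕ) (T : Finset ι) (β : ℕ → ι)
    (hdeg : (D.induce X).inDeg v < (∑ j ∈ T, F j v).1 ∨
      (D.induce X).outDeg v < (∑ j ∈ T, F j v).2) :
    ∃ c ∈ T, #(D.inNbrs v ∩ {w ∈ X.erase v | β w = c}) < (F c v).1 ∨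
      #(D.outNbrs v ∩ {w ∈ X.erase v | β w = c}) < (F c v).2 := by
  have hsub : ∀ (N : Finset ℕ) (c : ι),
      N ∩ {w ∈ X.erase v | β w = c} ⊆ {w ∈ N ∩ X | β w = c} := by
    intro N c w
    simp only [mem_inter, mem_filter, mem_erase]
    tauto
  have hfib : ∀ (N : Finset ℕ) (a : ι → ℕ), #(N ∩ X) < ∑ j ∈ T, a j →
      ∃ c ∈ T, #(N ∩ {w ∈ X.erase v | β w = c}) < a c := by
    intro N a hN
    obtain ⟨c, hc, hlt⟩ := exists_lt_of_sum_lt <|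
      (sum_card_fiberwise_eq_card_filter (N ∩ X) T β).trans_lt
        ((card_filter_le _ _).trans_lt hN)
    exact ⟨c, hc, (card_le_card (hsub N c)).trans_lt hlt⟩
  rw [inDeg_eq_card_inNbrs, outDeg_eq_card_outNbrs, inNbrs_induce hv, outNbrs_induce hv,
    Prod.fst_sum, Prod.snd_sum] at hdeg
  rcases hdeg with hdeg | hdeg
  · obtain ⟨c, hc, hlt⟩ := hfib _ _ hdeg
    exact ⟨c, hc, Or.inl hlt⟩
  · obtain ⟨c, hc, hlt⟩ := hfib _ _ hdeg
    exact ⟨c, hc, Or.inr hlt⟩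

theorem exists_colouring_of_strictlyBidegenerate_sum {ι : Type*} [DecidableEq ι] [Nonempty ι]
    (D : Digraph') (F : ι → ℕ → ℕ × ℕ) (T : Finset ι) (X : Finset ℕ) (hX : X ⊆ D.verts)
    (h : (D.induce X).StrictlyBidegenerate fun v => ∑ j ∈ T, F j v) :
    ∃ β : ℕ → ι, (∀ v ∈ X, β v ∈ T) ∧
      ∀ j ∈ T, (D.induce {v ∈ X | β v = j}).StrictlyBidegenerate (F j) := by
  induction X using Finset.strongInduction with
  | H X ih =>
  rcases X.eq_empty_or_nonempty with rfl | hXne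
  · exact ⟨fun _ => Classical.arbitrary ι, by simp, fun j _ => by
      simpa using strictlyBidegenerate_induce_empty D (F j)⟩
  rw [← induce_verts_of_subset hX] at hXne
  obtain ⟨v, hv, hdeg⟩ := h _ (IsSubdigraph.refl _) hXne
  rw [induce_verts_of_subset hX] at hv
  obtain ⟨β, hβT, hβ⟩ := ih (X.erase v) (erase_ssubset hv) ((erase_subset v X).trans hX)
    (h.anti (D.induce_mono (erase_subset v X)))
  obtain ⟨c, hcT, hc⟩ := exists_colour_lt_of_deg_lt hv F T β hdeg
  refine ⟨Function.update β v c, fun w hw => ?_, fun j hj => ?_⟩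
  · by_cases hwv : w = v
    · simpa [hwv] using hcT
    · simpa [hwv] using hβT w (mem_erase.mpr ⟨hwv, hw⟩)
  · by_cases hjc : j = c
    · subst hjc
      rw [Finset.filter_update_eq_insert hv]
      exact (hβ j hj).induce_insert hc
    · rw [Finset.filter_update_eq_of_ne β hjc]
      exact hβ j hj

/-- No edge of `D - x` joins `D₁ - x` to `D₂ - x`, so a connected `D - x` lies on one side. -/
theorem verts_eq_singleton_of_join {D D₁ D₂ : Digraph'} {x : ℕ}
    (hx : D₁.verts ∩ D₂.verts = {x}) (hV : D.verts = D₁.verts ∪ D₂.verts)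
    (hA : D.arcs = D₁.arcs ∪ D₂.arcs) (hconn : (D.del {x}).Connected) :
    D₁.verts = {x} ∨ D₂.verts = {x} := by
  have hx₁ : x ∈ D₁.verts := (mem_inter.mp (hx ▸ mem_singleton_self x)).1
  have hx₂ : x ∈ D₂.verts := (mem_inter.mp (hx ▸ mem_singleton_self x)).2
  have hend : ∀ a ∈ D₂.arcs, ∀ b ∈ D₁.verts, b ≠ x → a.1 ≠ b ∧ a.2 ≠ b := by
    intro a ha b hb hbx
    constructor <;> rintro rfl <;> apply hbx <;> rw [← mem_singleton, ← hx] <;>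
      simp [hb, D₂.mem_fst a ha, D₂.mem_snd a ha]
  simp only [eq_singleton_iff_unique_mem, hx₁, hx₂, true_and]
  by_contra! hne
  obtain ⟨⟨u, hu, hux⟩, ⟨w, hw, hwx⟩⟩ := hne
  have hdel : ∀ z, z ∈ D.verts → z ≠ x → z ∈ (D.del {x}).verts := fun z hz hzx => by
    simp [del_verts, hz, hzx]
  have hreach :
      ∀ z, Relation.ReflTransGen (D.del {x}).ugAdj u z → z ∈ D₁.verts ∧ z ≠ x := by
    intro z hz
    induction hz with
    | refl => exact ⟨hu, hux⟩
    | @tail b c _ hadj ih =>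
      obtain ⟨-, hc, hbc⟩ := hadj
      have hcx : c ≠ x := (by simpa [del_verts] using hc : c ∈ D.verts ∧ c ≠ x).2
      have hsub := (induce_isSubdigraph D (D.verts \ {x})).2
      refine ⟨?_, hcx⟩
      rcases hbc with hbc | hcb
      · rcases mem_union.mp (hA ▸ hsub hbc) with h | h
        · exact D₁.mem_snd _ h
        · exact absurd rfl (hend _ h b ih.1 ih.2).1
      · rcases mem_union.mp (hA ▸ hsub hcb) with h | h
        · exact D₁.mem_fst _ h
        · exact absurd rfl (hend _ h b ih.1 ih.2).2
  have := hreach w (hconn.2 u (hdel u (hV ▸ mem_union_left _ hu) hux) w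
    (hdel w (hV ▸ mem_union_right _ hw) hwx))
  exact hwx (mem_singleton.mp (hx ▸ mem_inter.mpr ⟨this.1, hw⟩))

theorem IsHardPair.eq_zero_of_verts_eq_singleton {s : ℕ} {D : Digraph'}
    {F : Fin s → ℕ → ℕ × ℕ} (h : IsHardPair s D F) {x : ℕ} (hx : D.verts = {x}) (k : Fin s) :
    F k x = (0, 0) := by
  induction h generalizing x with
  | mono _ hbi =>
    have := hbi.1
    simp [hx] at this
  | bicycle _ _ _ hD =>
    have := hD.2.1.2 x (by simp [hx])
    simp [ugNbrs, inNbrs, outNbrs, arcs_eq_empty_of_verts_eq_singleton hx] at this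
  | @complete D F _ _ hsym hsum =>
    have hsnd : (F k x).2 = 0 :=
      (by simpa [hx] using hsum x (by simp [hx]) : ∀ i, (F i x).2 = 0) k
    exact Prod.ext ((hsym k x (by simp [hx])).trans hsnd) hsnd
  | join D₁ D₂ F₁ F₂ y _ _ hy hV _ _ _ hFy ih₁ ih₂ =>
    have hxy : y = x := by
      have : y ∈ D₁.verts ∪ D₂.verts :=
        mem_union_left _ (mem_inter.mp (hy ▸ mem_singleton_self y)).1
      rwa [← hV, hx, mem_singleton] at this
    subst hxy
    have hsub : ∀ E : Digraph', y ∈ E.verts → E.verts ⊆ {y} → E.verts = {y} :=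
      fun E hy hE => Subset.antisymm hE (singleton_subset_iff.mpr hy)
    have hy₁ := hsub D₁ (mem_inter.mp (hy ▸ mem_singleton_self y)).1
      (hx ▸ hV ▸ subset_union_left)
    have hy₂ := hsub D₂ (mem_inter.mp (hy ▸ mem_singleton_self y)).2
      (hx ▸ hV ▸ subset_union_right)
    simp [hFy, ih₁ hy₁, ih₂ hy₂]

theorem eq_of_join_of_verts_eq_singleton {s : ℕ} {D D₁ D₂ : Digraph'}
    {F F₁ F₂ : Fin s → ℕ → ℕ × ℕ} {x : ℕ} (h₁ : IsHardPair s D₁ F₁) (hx₁ : D₁.verts = {x})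
    (hx₂ : x ∈ D₂.verts) (hV : D.verts = D₁.verts ∪ D₂.verts) (hA : D.arcs = D₁.arcs ∪ D₂.arcs)
    (hF₂ : ∀ k : Fin s, ∀ v ∈ D₂.verts, v ≠ x → F k v = F₂ k v)
    (hFx : ∀ k : Fin s, F k x = ((F₁ k x).1 + (F₂ k x).1, (F₁ k x).2 + (F₂ k x).2)) :
    D = D₂ ∧ ∀ k : Fin s, ∀ v ∈ D₂.verts, F k v = F₂ k v := by
  refine ⟨ext ?_ ?_, fun k v hv => ?_⟩
  · rw [hV, hx₁, union_eq_right.mpr (singleton_subset_iff.mpr hx₂)]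
  · rw [hA, arcs_eq_empty_of_verts_eq_singleton hx₁, empty_union]
  by_cases hvx : v = x
  · subst hvx
    simp [hFx k, h₁.eq_zero_of_verts_eq_singleton hx₁ k]
  · exact hF₂ k v hv hvx

/-- The hard pairs obtained without the join rule (and, for `mono`, without requiring
biconnectivity). -/
inductive IsBasicHardPair (s : ℕ) (D : Digraph') (F : Fin s → ℕ → ℕ × ℕ) : Prop
  | mono (i : Fin s) (hi : ∀ v ∈ D.verts, F i v = (D.inDeg v, D.outDeg v))
      (hk : ∀ k : Fin s, k ≠ i → ∀ v ∈ D.verts, F k v = (0, 0))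
  | bicycle (i j : Fin s) (hij : i ≠ j) (hD : D.BidirectedOddCycle)
      (hi : ∀ v ∈ D.verts, F i v = (1, 1)) (hj : ∀ v ∈ D.verts, F j v = (1, 1))
      (hk : ∀ k : Fin s, k ≠ i → k ≠ j → ∀ v ∈ D.verts, F k v = (0, 0))
  | complete (hD : D.BidirectedComplete)
      (hconst : ∀ k : Fin s, ∀ u ∈ D.verts, ∀ v ∈ D.verts, F k u = F k v)
      (hsym : ∀ k : Fin s, ∀ v ∈ D.verts, (F k v).1 = (F k v).2)
      (hsum : ∀ v ∈ D.verts, ∑ k, (F k v).2 = #D.verts - 1)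

theorem IsBasicHardPair.congr {s : ℕ} {D : Digraph'} {F G : Fin s → ℕ → ℕ × ℕ}
    (h : IsBasicHardPair s D F) (hFG : ∀ k : Fin s, ∀ v ∈ D.verts, F k v = G k v) :
    IsBasicHardPair s D G := by
  rcases h with ⟨i, hi, hk⟩ | ⟨i, j, hij, hD, hi, hj, hk⟩ | ⟨hD, hconst, hsym, hsum⟩
  · exact .mono i (fun v hv => (hFG i v hv).symm.trans (hi v hv))
      fun k hki v hv => (hFG k v hv).symm.trans (hk k hki v hv)
  · exact .bicycle i j hij hD (fun v hv => (hFG i v hv).symm.trans (hi v hv))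
      (fun v hv => (hFG j v hv).symm.trans (hj v hv))
      fun k hki hkj v hv => (hFG k v hv).symm.trans (hk k hki hkj v hv)
  · refine .complete hD (fun k u hu v hv => ?_) (fun k v hv => ?_) fun v hv => ?_
    · rw [← hFG k u hu, ← hFG k v hv]
      exact hconst k u hu v hv
    · rw [← hFG k v hv]
      exact hsym k v hv
    · rw [← hsum v hv]
      exact sum_congr rfl fun k _ => by rw [hFG k v hv]

theorem IsHardPair.isBasic {s : ℕ} {D : Digraph'} {F : Fin s → ℕ → ℕ × ℕ}
    (h : IsHardPair s D F) (hbi : D.Biconnected) : IsBasicHardPair s D F := by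
  induction h with
  | mono i _ hi hk => exact .mono i hi hk
  | bicycle i j hij hD hi hj hk => exact .bicycle i j hij hD hi hj hk
  | complete hD hconst hsym hsum => exact .complete hD hconst hsym hsum
  | join D₁ D₂ F₁ F₂ x h₁ h₂ hx hV hA hF₁ hF₂ hFx ih₁ ih₂ =>
    have hx₁ : x ∈ D₁.verts := (mem_inter.mp (hx ▸ mem_singleton_self x)).1
    have hx₂ : x ∈ D₂.verts := (mem_inter.mp (hx ▸ mem_singleton_self x)).2
    rcases verts_eq_singleton_of_join hx hV hA (hbi.2.2 x (hV ▸ mem_union_left _ hx₁))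
      with hs | hs
    · obtain ⟨rfl, hF⟩ := eq_of_join_of_verts_eq_singleton h₁ hs hx₂ hV hA hF₂ hFx
      exact (ih₂ hbi).congr fun k v hv => (hF k v hv).symm
    · obtain ⟨rfl, hF⟩ := eq_of_join_of_verts_eq_singleton h₂ hs hx₁
        (hV.trans (union_comm _ _)) (hA.trans (union_comm _ _)) hF₁
        fun k => by rw [hFx k, add_comm, add_comm (F₁ k x).2]
      exact (ih₁ hbi).congr fun k v hv => (hF k v hv).symm

end Digraph'

open Finset

theorem Finset.eq_zero_of_sum_eq_self {ι M : Type*} [AddCommMonoid M] [PartialOrder M]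
    [CanonicallyOrderedAdd M] [IsLeftCancelAdd M] [DecidableEq ι] {t : Finset ι} {f : ι → M}
    {j k : ι} (hj : j ∈ t) (h : ∑ x ∈ t, f x = f j) (hk : k ∈ t) (hkj : k ≠ j) : f k = 0 := by
  rw [← add_sum_erase t f hj, add_eq_left] at h
  exact sum_eq_zero_iff.mp h k (mem_erase.mpr ⟨hkj, hk⟩)

section TwoColours

variable {s : ℕ} {D : Digraph'} {F : Fin s → ℕ → ℕ × ℕ}

@[simp]
theorem twoColours_zero (F : Fin s → ℕ → ℕ × ℕ) (i : Fin s) : twoColours F i 0 = F i := rfl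

@[simp]
theorem twoColours_one (F : Fin s → ℕ → ℕ × ℕ) (i : Fin s) (v : ℕ) :
    twoColours F i 1 v = ∑ j ∈ univ.erase i, F j v := rfl

theorem sum_twoColours (F : Fin s → ℕ → ℕ × ℕ) (i : Fin s) (v : ℕ) :
    ∑ k, twoColours F i k v = ∑ j, F j v := by
  rw [Fin.sum_univ_two, twoColours_zero, twoColours_one,
    add_sum_erase _ (fun j => F j v) (mem_univ i)]

theorem validPair_twoColours (hvalid : D.ValidPair s F) (i : Fin s) :
    D.ValidPair 2 (twoColours F i) := by
  refine ⟨hvalid.1, fun v hv => ?_⟩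
  rw [← Prod.fst_sum, ← Prod.snd_sum, sum_twoColours, Prod.fst_sum, Prod.snd_sum]
  exact hvalid.2 v hv

theorem dicolourable_of_twoColours (i : Fin s) (h : D.Dicolourable 2 (twoColours F i)) :
    D.Dicolourable s F := by
  obtain ⟨α, hα⟩ := h
  have : Nonempty (Fin s) := ⟨i⟩
  obtain ⟨γ, hγT, hγ⟩ := exists_colouring_of_strictlyBidegenerate_sum D F (univ.erase i)
    {v ∈ D.verts | α v = 1} (filter_subset _ _) (hα 1)
  refine ⟨fun v => if α v = 0 then i else γ v, fun k => ?_⟩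
  by_cases hki : k = i
  · subst hki
    have hclass : {v ∈ D.verts | (if α v = 0 then k else γ v) = k} =
        {v ∈ D.verts | α v = 0} := by
      refine filter_congr fun v hv => ?_
      by_cases hv0 : α v = 0
      · simp [hv0]
      · have hv1 : α v = 1 := by omega
        simpa [hv0] using ne_of_mem_erase (hγT v (mem_filter.mpr ⟨hv, hv1⟩))
    rw [hclass]
    exact hα 0
  · have hclass : {v ∈ D.verts | (if α v = 0 then i else γ v) = k} =
        {v ∈ {v ∈ D.verts | α v = 1} | γ v = k} := by
      ext v
      by_cases hv0 : α v = 0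
      · simp [hv0, Ne.symm hki]
      · have hv1 : α v = 1 := by omega
        simp [hv1]
    rw [hclass]
    exact hγ k (mem_erase.mpr ⟨hki, mem_univ k⟩)

theorem exists_ne_zero_of_validPair (hvalid : D.ValidPair s F) (h2 : 2 ≤ #D.verts) :
    ∃ i, ∃ v ∈ D.verts, F i v ≠ 0 := by
  obtain ⟨a, ha⟩ := exists_arc hvalid.1 h2
  have hpos : 0 < D.inDeg a.2 := card_pos.mpr ⟨a, mem_filter.mpr ⟨ha, rfl⟩⟩
  have hsum : ∑ i, (F i a.2).1 ≠ 0 := by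
    have := (hvalid.2 a.2 (D.mem_snd a ha)).1
    omega
  obtain ⟨i, -, hi⟩ := exists_ne_zero_of_sum_ne_zero hsum
  exact ⟨i, a.2, D.mem_snd a ha, fun h => hi (by simp [h])⟩

theorem twoColours_bicycle_or_complete (hbi : D.Biconnected) (hF : ¬ IsHardPair s D F)
    {i : Fin s} (hi : ∃ v ∈ D.verts, F i v ≠ 0) (h : IsBasicHardPair 2 D (twoColours F i)) :
    (D.BidirectedOddCycle ∧ (∀ v ∈ D.verts, F i v = (1, 1)) ∧
        ∀ v ∈ D.verts, ∑ j ∈ univ.erase i, F j v = (1, 1)) ∨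
      (D.BidirectedComplete ∧ (∃ p, ∀ v ∈ D.verts, F i v = (p, p)) ∧
        ∀ v ∈ D.verts, ∑ k, (F k v).2 = #D.verts - 1) := by
  rcases h with ⟨c, hc, hk⟩ | ⟨i', j', hij, hD, hi', hj', -⟩ | ⟨hD, hconst, hsym, hsum⟩
  · exfalso
    fin_cases c
    · refine hF (.mono i hbi hc fun k hki v hv => ?_)
      have hrest : ∑ j ∈ univ.erase i, F j v = 0 := hk 1 (by decide) v hv
      exact sum_eq_zero_iff.mp hrest k (mem_erase.mpr ⟨hki, mem_univ k⟩)
    · obtain ⟨v, hv, hne⟩ := hi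
      exact hne (hk 0 (by decide) v hv)
  · have hall : ∀ k : Fin 2, ∀ v ∈ D.verts, twoColours F i k v = (1, 1) := by
      intro k
      rcases (show k = i' ∨ k = j' by omega) with rfl | rfl
      exacts [hi', hj']
    exact .inl ⟨hD, hall 0, hall 1⟩
  · obtain ⟨u, hu⟩ := card_pos.mp (zero_lt_two.trans_le hbi.1)
    refine .inr ⟨hD, ⟨(F i u).1, fun v hv => ?_⟩, fun v hv => ?_⟩
    · rw [show F i v = F i u from hconst 0 v hv u hu]
      exact Prod.ext rfl (hsym 0 u hu).symm
    · rw [← hsum v hv, ← Prod.snd_sum, ← Prod.snd_sum, sum_twoColours]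

theorem exists_diag_of_forall_isBasicHardPair (hbi : D.Biconnected) (hF : ¬ IsHardPair s D F)
    (hall : ∀ i, IsBasicHardPair 2 D (twoColours F i)) (k : Fin s) :
    ∃ p, ∀ v ∈ D.verts, F k v = (p, p) := by
  by_cases hk : ∃ v ∈ D.verts, F k v ≠ 0
  · rcases twoColours_bicycle_or_complete hbi hF hk (hall k) with ⟨-, hk1, -⟩ | ⟨-, hp, -⟩
    exacts [⟨1, hk1⟩, hp]
  · push Not at hk
    exact ⟨0, hk⟩

theorem exists_not_isHardPair_twoColours (hbi : D.Biconnected)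
    (hsupp : ∃ i, ∃ v ∈ D.verts, F i v ≠ 0) (hF : ¬ IsHardPair s D F) :
    ∃ i, ¬ IsHardPair 2 D (twoColours F i) := by
  by_contra! hall
  have hbasic i := (hall i).isBasic hbi
  have hdiag := exists_diag_of_forall_isBasicHardPair hbi hF hbasic
  obtain ⟨i, hi⟩ := hsupp
  rcases twoColours_bicycle_or_complete hbi hF hi (hbasic i) with
    ⟨hD, hFi, hsum⟩ | ⟨hD, -, hsum⟩
  · obtain ⟨v₀, hv₀⟩ := card_pos.mp (zero_lt_two.trans_le hbi.1)
    have hne : ∑ j ∈ univ.erase i, F j v₀ ≠ 0 := by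
      rw [hsum v₀ hv₀]
      decide
    obtain ⟨j, hj, hj0⟩ := exists_ne_zero_of_sum_ne_zero hne
    obtain ⟨p, hp⟩ := hdiag j
    have hle : F j v₀ ≤ (1, 1) :=
      hsum v₀ hv₀ ▸ single_le_sum (f := fun j => F j v₀) (fun _ _ => zero_le) hj
    have hp1 : p = 1 := by
      rw [hp v₀ hv₀] at hle hj0
      have : p ≠ 0 := fun h => hj0 (by simp [h])
      have : p ≤ 1 := (Prod.mk_le_mk.mp hle).1
      omega
    subst hp1
    refine hF (.bicycle i j (ne_of_mem_erase hj).symm hD hFi hp fun k hki hkj v hv => ?_)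
    exact eq_zero_of_sum_eq_self (f := fun j => F j v) hj ((hsum v hv).trans (hp v hv).symm)
      (mem_erase.mpr ⟨hki, mem_univ k⟩) hkj
  · refine hF (.complete hD (fun k u hu v hv => ?_) (fun k v hv => ?_) hsum) <;>
      obtain ⟨p, hp⟩ := hdiag k
    · rw [hp u hu, hp v hv]
    · rw [hp v hv]

end TwoColours

/-- **Lemma (reduction to two colours).** Let `(D,F)` be a valid pair that is not hard with
`D` biconnected. Then either `D` is `F`-dicolourable, or there is a colour `i` such that,
setting `f̃₁ = fᵢ` and `f̃₂ = Σ_{j≠i} f_j`, the pair `(D,(f̃₁,f̃₂))` is valid and not hard, and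
`F̃`-dicolourability of `D` implies its `F`-dicolourability. -/
theorem reduce_to_two_colours
    (D : Digraph') (s : ℕ) (F : Fin s → ℕ → ℕ × ℕ)
    (hvalid : D.ValidPair s F) (hnothard : ¬ IsHardPair s D F) (hbi : D.Biconnected) :
    D.Dicolourable s F ∨
      ∃ i : Fin s,
        D.ValidPair 2 (twoColours F i) ∧
        ¬ IsHardPair 2 D (twoColours F i) ∧
        (D.Dicolourable 2 (twoColours F i) → D.Dicolourable s F) := by
  obtain ⟨i, hi⟩ := exists_not_isHardPair_twoColours hbi
    (exists_ne_zero_of_validPair hvalid hbi.1) hnothard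
  exact .inr ⟨i, validPair_twoColours hvalid i, hi, dicolourable_of_twoColours i⟩
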